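/- Let x ∈ ℝ, n ≥ 1, let λ₁, …, λₙ be pairwise distinct real numbers, let ϑ : ℝ → ℂ be any function, and let R > max_j |λ_j|. Define the discrete sine kernel S by S(λ, μ) = ϑ(μ) · sin(x(λ − μ)/2) / (π(λ − μ)) for λ ≠ μ and S(λ, λ) = ϑ(λ) · x / (2π). Then (1/(2πi)^{2n}) ∮ … ∮ ∏_{j=1}^{n} [ϑ(λ_j) e^{ix(λ_j − z_j)} / (λ_j − z_j)] · det[(z_k − λ_j)^{−1}]_{j,k=1}^{n} dz_n … dz_1 = det[S(λ_j, λ_k)]_{j,k=1}^{n}, where each variable z₁, …, zₙ is integrated once counterclockwise around the circle |z| = R. -/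

import Mathlib

/-!
Expanding the determinant by Leibniz' formula and absorbing the prefactor `∏ⱼ` into its columns,
the integrand becomes a sum of products of functions of one variable each, so the iterated
integral is the determinant of the matrix of one-variable integrals. Each of these is a Cauchy
integral `∮ f(z) / ((z - a)(z - b)) dz = 2πi · dslope f a b` of `f(z) = exp(-ixz)`, and the
resulting divided differences of the exponential are, up to conjugation by the diagonal matrix
`diag(exp(ixλⱼ/2))`, the entries of the sine kernel.
-/

open MeasureTheory

/-- Iterated counterclockwise contour integral over the circle `|z - c| = R`
in each of the `n` variables. -/
noncomputable def iterCircleIntegral : (n : ℕ) → ((Fin n → ℂ) → ℂ) → ℂ → ℝ → ℂ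
  | 0, f, _, _ => f Fin.elim0
  | n + 1, f, c, R =>
      circleIntegral (fun z => iterCircleIntegral n (fun w => f (Fin.cons z w)) c R) c R

open Complex Metric
open scoped Real

section CircleIntegral

variable {c : ℂ} {R : ℝ}

theorem circleIntegrable_sub_inv_smul {E : Type*} [NormedAddCommGroup E] [NormedSpace ℂ E]
    {f : ℂ → E} {w : ℂ} (hf : ContinuousOn f (sphere c R))
    (hw : w ∈ ball c R) : CircleIntegrable (fun z => (z - w)⁻¹ • f z) c R :=
  ContinuousOn.circleIntegrable (pos_of_mem_ball hw).le <|
    ((continuousOn_id.sub continuousOn_const).inv₀ fun _ hz =>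
      sub_ne_zero.2 (sphere_disjoint_ball.ne_of_mem hz hw)).smul hf

theorem circleIntegrable_div_sub_mul_sub {f : ℂ → ℂ} {a b : ℂ}
    (hf : ContinuousOn f (sphere c R)) (ha : a ∈ ball c R) (hb : b ∈ ball c R) :
    CircleIntegrable (fun z => f z / ((z - a) * (z - b))) c R :=
  ContinuousOn.circleIntegrable (pos_of_mem_ball ha).le <|
    hf.div (by fun_prop) fun _ hz => mul_ne_zero
      (sub_ne_zero.2 (sphere_disjoint_ball.ne_of_mem hz ha))
      (sub_ne_zero.2 (sphere_disjoint_ball.ne_of_mem hz hb))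

theorem circleIntegral_div_sub_mul_sub {U : Set ℂ} (hU : IsOpen U) {f : ℂ → ℂ} {a b : ℂ}
    (hc : closedBall c R ⊆ U) (hf : DifferentiableOn ℂ f U) (ha : a ∈ ball c R)
    (hb : b ∈ ball c R) :
    (∮ z in C(c, R), f z / ((z - a) * (z - b))) = 2 * π * I * dslope f a b := by
  rcases eq_or_ne a b with rfl | hab
  · rw [dslope_same, ← two_pi_I_inv_smul_circleIntegral_sub_sq_inv_smul_of_differentiable hU hc
      hf ha, smul_eq_mul, mul_inv_cancel_left₀ two_pi_I_ne_zero]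
    simp only [smul_eq_mul, sq, div_eq_inv_mul]
  · have hfs : ContinuousOn f (sphere c R) :=
      hf.continuousOn.mono (sphere_subset_closedBall.trans hc)
    have hpartial : Set.EqOn (fun z => f z / ((z - a) * (z - b)))
        (fun z => (b - a)⁻¹ * ((z - b)⁻¹ • f z - (z - a)⁻¹ • f z)) (sphere c R) := by
      intro z hz
      have hza := sub_ne_zero.2 (sphere_disjoint_ball.ne_of_mem hz ha)
      have hzb := sub_ne_zero.2 (sphere_disjoint_ball.ne_of_mem hz hb)
      have hba := sub_ne_zero.2 hab.symm
      simp only [smul_eq_mul]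
      field_simp
      ring
    have hd := hf.mono hc
    rw [circleIntegral.integral_congr (pos_of_mem_ball ha).le hpartial,
      circleIntegral.integral_const_mul, circleIntegral.integral_sub
        (circleIntegrable_sub_inv_smul hfs hb) (circleIntegrable_sub_inv_smul hfs ha),
      hd.circleIntegral_sub_inv_smul hb, hd.circleIntegral_sub_inv_smul ha,
      dslope_of_ne _ hab.symm, slope_def_field]
    simp only [smul_eq_mul]
    ring

theorem iterCircleIntegral_sum_mul_prod {ι : Type*} (s : Finset ι) {n : ℕ} (a : ι → ℂ)
    (F : ι → Fin n → ℂ → ℂ) (hF : ∀ i k, CircleIntegrable (F i k) c R) :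
    iterCircleIntegral n (fun z => ∑ i ∈ s, a i * ∏ k, F i k (z k)) c R
      = ∑ i ∈ s, a i * ∏ k, ∮ w in C(c, R), F i k w := by
  induction n generalizing a with
  | zero => simp [iterCircleIntegral]
  | succ n ih =>
    have hslice : ∀ z, iterCircleIntegral n
        (fun w => ∑ i ∈ s, a i * ∏ k, F i k ((Fin.cons z w : Fin (n + 1) → ℂ) k)) c R
          = ∑ i ∈ s, (a i * ∏ k : Fin n, ∮ w in C(c, R), F i k.succ w) * F i 0 z := by
      intro z
      simp only [Fin.prod_univ_succ, Fin.cons_zero, Fin.cons_succ, mul_left_comm (a _),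
        ← mul_assoc]
      rw [ih _ _ fun i k => hF i k.succ]
      exact Finset.sum_congr rfl fun i _ => by ring
    simp only [iterCircleIntegral, hslice]
    rw [circleIntegral.integral_fun_sum fun i _ =>
      (hF i 0).fun_continuousOn_mul continuousOn_const]
    refine Finset.sum_congr rfl fun i _ => ?_
    rw [circleIntegral.integral_const_mul, Fin.prod_univ_succ]
    ring

theorem iterCircleIntegral_det {n : ℕ} (F : Fin n → Fin n → ℂ → ℂ)
    (hF : ∀ j k, CircleIntegrable (F j k) c R) :
    iterCircleIntegral n (fun z => (Matrix.of fun j k => F j k (z k)).det) c R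
      = (Matrix.of fun j k => ∮ w in C(c, R), F j k w).det := by
  simp only [Matrix.det_apply', Matrix.of_apply]
  exact iterCircleIntegral_sum_mul_prod Finset.univ (fun σ => ((Equiv.Perm.sign σ : ℤ) : ℂ))
    (fun σ k => F (σ k) k) fun _ _ => hF _ _

end CircleIntegral

theorem Matrix.det_of_inv_mul_mul {n K : Type*} [Fintype n] [DecidableEq n] [Field K]
    (M : Matrix n n K) {u : n → K} (hu : ∀ i, u i ≠ 0) :
    (Matrix.of fun i j => (u i)⁻¹ * M i j * u j).det = M.det := by
  have hM : (Matrix.of fun i j => (u i)⁻¹ * M i j * u j)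
      = Matrix.of fun i j => (u i)⁻¹ * (Matrix.of fun i j => u j * M i j) i j := by
    ext i j
    simp only [Matrix.of_apply]
    ring
  rw [hM, det_mul_column, det_mul_row, ← mul_assoc, ← Finset.prod_mul_distrib,
    Finset.prod_eq_one fun i _ => inv_mul_cancel₀ (hu i), one_mul]

noncomputable def sineKernel (x a b : ℝ) : ℝ :=
  if a = b then x / (2 * π) else Real.sin (x * (a - b) / 2) / (π * (a - b))

theorem neg_exp_mul_dslope_div_eq_sineKernel (x a b : ℝ) :
    -(exp (I * x * b)) * dslope (fun w => exp (-(I * x * w))) b a / (2 * π * I)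
      = (exp (I * x * a / 2))⁻¹ * sineKernel x a b * exp (I * x * b / 2) := by
  have hπ : (π : ℂ) ≠ 0 := ofReal_ne_zero.2 Real.pi_ne_zero
  rcases eq_or_ne a b with rfl | hab
  · have hderiv : HasDerivAt (fun w : ℂ => exp (-(I * x * w)))
        (exp (-(I * x * a)) * -(I * x)) a := by
      simpa using ((hasDerivAt_id (a : ℂ)).const_mul (I * x)).neg.cexp
    have hinv : exp (I * x * a) * exp (-(I * x * a)) = 1 := by rw [← exp_add]; simp
    rw [dslope_same, hderiv.deriv, sineKernel, if_pos rfl]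
    push_cast
    field_simp
    linear_combination (x : ℂ) * hinv
  · rw [dslope_of_ne _ (by exact_mod_cast hab), slope_def_field, sineKernel, if_neg hab]
    have hsub : (a : ℂ) - b ≠ 0 := sub_ne_zero.2 (by exact_mod_cast hab)
    have hsin : sin (x * (a - b) / 2)
        = ((exp (I * x * a / 2))⁻¹ * exp (I * x * b / 2)
          - exp (I * x * a / 2) * (exp (I * x * b / 2))⁻¹) * I / 2 := by
      rw [Complex.sin, ← exp_neg, ← exp_neg, ← exp_add, ← exp_add]
      ring_nf
    have hsq : ∀ t : ℂ, exp t = exp (t / 2) ^ 2 := fun t => by rw [← exp_nat_mul]; ring_nf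
    push_cast
    rw [hsin, hsq (I * x * b), hsq (-(I * x * a)), hsq (-(I * x * b)), neg_div, neg_div,
      exp_neg, exp_neg]
    field_simp
    linear_combination (exp (I * x * a / 2) ^ 2 - exp (I * x * b / 2) ^ 2) * I_sq

theorem circleIntegral_exp_div_eq_sineKernel {c : ℂ} {R : ℝ} {x p q : ℝ} (θ : ℂ)
    (hp : (p : ℂ) ∈ ball c R) (hq : (q : ℂ) ∈ ball c R) :
    (1 / (2 * (π : ℂ) * I)) ^ 2 *
        ∮ w in C(c, R), -(θ * exp (I * x * p)) * (exp (-(I * x * w)) / ((w - p) * (w - q)))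
      = (exp (I * x * q / 2))⁻¹ * (θ * sineKernel x q p) * exp (I * x * p / 2) := by
  rw [circleIntegral.integral_const_mul, circleIntegral_div_sub_mul_sub isOpen_univ
    (Set.subset_univ _) (by fun_prop) hp hq, mul_left_comm _ θ, mul_assoc θ,
    ← neg_exp_mul_dslope_div_eq_sineKernel]
  field_simp

theorem prod_exp_div_mul_det_of_inv_sub {ι : Type*} [Fintype ι] [DecidableEq ι] (x : ℝ)
    (θ q z : ι → ℂ) :
    (∏ j, θ j * exp (I * x * (q j - z j)) / (q j - z j)) *
        (Matrix.of fun j k => (z k - q j)⁻¹).det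
      = (Matrix.of fun j k => -(θ k * exp (I * x * q k)) *
          (exp (-(I * x * z k)) / ((z k - q k) * (z k - q j)))).det := by
  rw [← Matrix.det_mul_row]
  congr 1
  ext j k
  have hexp : exp (I * x * (q k - z k)) = exp (I * x * q k) * exp (-(I * x * z k)) := by
    rw [← exp_add]
    ring_nf
  simp only [Matrix.of_apply]
  rw [hexp, ← neg_sub (z k), div_eq_mul_inv, div_eq_mul_inv, mul_inv, inv_neg]
  ring

theorem stmt2_general (x : ℝ) (n : ℕ) (lam : Fin n → ℝ)
    (hinj : Function.Injective lam)
    (ϑ : ℝ → ℂ) (R : ℝ) (hR : ∀ j, |lam j| < R)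
    (S : Matrix (Fin n) (Fin n) ℂ)
    (hS : ∀ j k, S j k =
      if j = k then ϑ (lam j) * ((x / (2 * Real.pi) : ℝ) : ℂ)
      else ϑ (lam k) *
        ((Real.sin (x * (lam j - lam k) / 2) / (Real.pi * (lam j - lam k)) : ℝ) : ℂ)) :
    (1 / (2 * (Real.pi : ℂ) * Complex.I)) ^ (2 * n) *
      iterCircleIntegral n (fun z => (∏ j, ϑ (lam j) *
          Complex.exp (Complex.I * (x : ℂ) * ((lam j : ℂ) - z j)) / ((lam j : ℂ) - z j)) *
        Matrix.det (Matrix.of fun j k => (z k - (lam j : ℂ))⁻¹)) 0 R = S.det := by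
  have hball : ∀ j, (lam j : ℂ) ∈ ball (0 : ℂ) R := fun j => by simpa using hR j
  have hS' : ∀ j k, S j k = ϑ (lam k) * sineKernel x (lam j) (lam k) := by
    intro j k
    rw [hS, sineKernel]
    by_cases hjk : j = k
    · simp [hjk]
    · simp [hjk, hinj.ne hjk]
  simp_rw [prod_exp_div_mul_det_of_inv_sub]
  rw [iterCircleIntegral_det (fun j k w => -(ϑ (lam k) * exp (I * x * lam k)) *
      (exp (-(I * x * w)) / ((w - lam k) * (w - lam j)))) fun j k =>
    (circleIntegrable_div_sub_mul_sub (by fun_prop) (hball k) (hball j)).fun_continuousOn_mul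
      continuousOn_const]
  calc _ = ((1 / (2 * (π : ℂ) * I)) ^ 2 • Matrix.of fun j k => ∮ w in C(0, R),
        -(ϑ (lam k) * exp (I * x * lam k)) *
          (exp (-(I * x * w)) / ((w - lam k) * (w - lam j)))).det := by
        rw [Matrix.det_smul, Fintype.card_fin, pow_mul]
    _ = (Matrix.of fun j k =>
        (exp (I * x * lam j / 2))⁻¹ * S j k * exp (I * x * lam k / 2)).det := by
        congr 1
        ext j k
        simp only [Matrix.smul_apply, Matrix.of_apply, smul_eq_mul, hS']
        exact circleIntegral_exp_div_eq_sineKernel _ (hball k) (hball j)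
    _ = S.det := S.det_of_inv_mul_mul fun j => exp_ne_zero _

theorem stmt2 (x : ℝ) (n : ℕ) (hn : 1 ≤ n) (lam : Fin n → ℝ)
    (hinj : Function.Injective lam)
    (ϑ : ℝ → ℂ) (R : ℝ) (hR : ∀ j, |lam j| < R)
    (S : Matrix (Fin n) (Fin n) ℂ)
    (hS : ∀ j k, S j k =
      if j = k then ϑ (lam j) * ((x / (2 * Real.pi) : ℝ) : ℂ)
      else ϑ (lam k) *
        ((Real.sin (x * (lam j - lam k) / 2) / (Real.pi * (lam j - lam k)) : ℝ) : ℂ)) :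
    (1 / (2 * (Real.pi : ℂ) * Complex.I)) ^ (2 * n) *
      iterCircleIntegral n (fun z => (∏ j, ϑ (lam j) *
          Complex.exp (Complex.I * (x : ℂ) * ((lam j : ℂ) - z j)) / ((lam j : ℂ) - z j)) *
        Matrix.det (Matrix.of fun j k => (z k - (lam j : ℂ))⁻¹)) 0 R = S.det :=
  stmt2_general x n lam hinj ϑ R hR S hS
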